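/- arXiv:2010.05955 — 2 statements merged into one kernel-verified Lean document; each statement's English description precedes it below -/
import Mathlib

section
/- For every s ∈ ℂ with Re s > 1/2 and every M ∈ ℕ, there exists a function g_{M+1} holomorphic on the half-plane {Re s > -M/2} such that ∑_{j=0}^∞ ((j+X)(j+1+X))^{-s} = ∑_{m=0}^{M} binom(-s, m) ζ(2s+m, X) + g_{M+1}(s), where X = x₀⁻¹ with x₀ ∈ (0,1), ζ(·,·) is the Hurwitz zeta function, and moreover for every γ > 0 one has g_{M+1}(s) = O(|s|^{M+1}) as |s| → ∞ in {Re s ≥ -M/2 + γ}. -/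
/-!
With `a = j + X` one has `((j + X)(j + 1 + X))^{-s} = a^{-2s} (1 + a⁻¹)^{-s}`. Expanding
`(1 + u)^{-s}` binomially to degree `M` produces the Hurwitz terms `binom(-s, m) a^{-(2s+m)}`,
and for `Re s ≥ -(M + 1)` and `u ≥ 0` the remainder is at most the next term
`|binom(-s, M + 1)| u^{M+1}`: its `u`-derivative is `-s` times the remainder of degree one less
for `s + 1`, so the bound follows by induction from the mean value inequality. The `j`-th term of
the tail is thus `O((|s| + M + 1)^{M+1} a^{-2 Re s - M - 1})`, which is summable locally
uniformly on `Re s > -M/2`; the tail series is therefore holomorphic there and grows at most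
like `|s|^{M+1}`.
-/

open Complex Finset

/-- The generalized binomial coefficient `binom(z, m) = z(z-1)⋯(z-m+1)/m!`. -/
noncomputable def genBinom (z : ℂ) (m : ℕ) : ℂ :=
  (∏ i ∈ Finset.range m, (z - i)) / (m.factorial : ℂ)

/-- The Hurwitz zeta function `ζ(s,q) = ∑_{j≥0} (j+q)^{-s}` (as a series; for
`Re s > 1` this agrees with the meromorphic continuation). -/
noncomputable def hurwitzSeries (s q : ℂ) : ℂ := ∑' j : ℕ, ((j : ℂ) + q) ^ (-s)

@[simp]
lemma genBinom_zero (z : ℂ) : genBinom z 0 = 1 := by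
  simp [genBinom]

lemma add_one_mul_genBinom_succ (z : ℂ) (m : ℕ) :
    ((m : ℂ) + 1) * genBinom z (m + 1) = z * genBinom (z - 1) m := by
  have hprod : ∏ i ∈ range (m + 1), (z - i) = z * ∏ i ∈ range m, (z - 1 - i) := by
    rw [prod_range_succ', mul_comm]
    push_cast
    simp only [sub_zero, sub_add_eq_sub_sub, sub_right_comm _ (1 : ℂ)]
  rw [genBinom, genBinom, hprod, Nat.factorial_succ]
  push_cast
  field_simp

lemma norm_genBinom_neg_le (s : ℂ) (n : ℕ) : ‖genBinom (-s) n‖ ≤ (‖s‖ + n) ^ n := by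
  have hfac : (1 : ℝ) ≤ n.factorial := mod_cast Nat.one_le_iff_ne_zero.2 n.factorial_ne_zero
  calc ‖genBinom (-s) n‖ = (∏ i ∈ range n, ‖s + i‖) / n.factorial := by
        simp only [genBinom, norm_div, norm_prod, Complex.norm_natCast, ← norm_neg (-s - _)]
        simp only [neg_sub, sub_neg_eq_add, add_comm]
    _ ≤ ∏ i ∈ range n, ‖s + i‖ := div_le_self (by positivity) hfac
    _ ≤ ∏ _i ∈ range n, (‖s‖ + n) := by
        refine prod_le_prod (fun _ _ => norm_nonneg _) fun i hi => (norm_add_le _ _).trans ?_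
        simpa using (mem_range.1 hi).le
    _ = (‖s‖ + n) ^ n := by rw [prod_const, card_range]

noncomputable def binomRemainder (s : ℂ) (n : ℕ) (u : ℝ) : ℂ :=
  ((1 + u : ℝ) : ℂ) ^ (-s) - ∑ m ∈ range n, genBinom (-s) m * (u : ℂ) ^ m

lemma binomRemainder_succ_zero (s : ℂ) (n : ℕ) : binomRemainder s (n + 1) 0 = 0 := by
  simp [binomRemainder, sum_range_succ']

lemma hasDerivAt_binomRemainder_succ (s : ℂ) (n : ℕ) {t : ℝ} (ht : 0 < 1 + t) :
    HasDerivAt (binomRemainder s (n + 1)) (-s * binomRemainder (s + 1) n t) t := by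
  have hpow : HasDerivAt (fun u : ℝ => ((1 + u : ℝ) : ℂ) ^ (-s))
      (-s * ((1 + t : ℝ) : ℂ) ^ (-s - 1)) t := by
    have h := ((hasDerivAt_id (t : ℂ)).const_add 1).cpow_const (c := -s)
      (by rw [id]; exact_mod_cast ofReal_mem_slitPlane.2 ht)
    simpa using h.comp_ofReal
  have hpoly : HasDerivAt (fun u : ℝ => ∑ m ∈ range (n + 1), genBinom (-s) m * (u : ℂ) ^ m)
      (∑ m ∈ range n, -s * (genBinom (-(s + 1)) m * (t : ℂ) ^ m)) t := by
    have h := HasDerivAt.fun_sum (u := range (n + 1)) fun m _ =>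
      ((hasDerivAt_pow m (t : ℂ)).comp_ofReal).const_mul (genBinom (-s) m)
    refine h.congr_deriv ?_
    rw [sum_range_succ']
    simp only [CharP.cast_eq_zero, zero_mul, mul_zero, add_zero]
    refine sum_congr rfl fun m _ => ?_
    have hb := add_one_mul_genBinom_succ (-s) m
    rw [show -s - 1 = -(s + 1) by ring] at hb
    push_cast
    rw [← mul_assoc, mul_comm _ ((m : ℂ) + 1), hb, mul_assoc]
  have hrem := hpow.sub hpoly
  refine hrem.congr_deriv ?_
  rw [binomRemainder, mul_sub, mul_sum, show -s - 1 = -(s + 1) by ring]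

lemma norm_binomRemainder_le (n : ℕ) {s : ℂ} {u : ℝ} (hu : 0 ≤ u) (hs : -(n : ℝ) ≤ s.re) :
    ‖binomRemainder s n u‖ ≤ ‖genBinom (-s) n‖ * u ^ n := by
  induction n generalizing s u with
  | zero =>
    rw [Nat.cast_zero, neg_zero] at hs
    simp only [binomRemainder, range_zero, sum_empty, sub_zero, genBinom_zero, norm_one,
      pow_zero, mul_one, norm_cpow_eq_rpow_re_of_pos (by linarith : 0 < 1 + u), neg_re]
    exact Real.rpow_le_one_of_one_le_of_nonpos (by linarith) (by linarith)
  | succ n ih =>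
    have hs' : -(n : ℝ) ≤ (s + 1).re := by rw [add_re, one_re]; push_cast at hs; linarith
    have hcoef : ‖genBinom (-s) (n + 1)‖ * ((n : ℝ) + 1) = ‖s‖ * ‖genBinom (-(s + 1)) n‖ := by
      have h := congrArg norm (add_one_mul_genBinom_succ (-s) n)
      rw [show -s - 1 = -(s + 1) by ring, norm_mul, norm_mul, norm_neg] at h
      rw [← h, mul_comm]
      exact_mod_cast congrArg (· * _) (Complex.norm_natCast (n + 1)).symm
    have hderiv : ∀ t ∈ Set.Icc 0 u,
        HasDerivAt (binomRemainder s (n + 1)) (-s * binomRemainder (s + 1) n t) t :=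
      fun t ht => hasDerivAt_binomRemainder_succ s n (by linarith [ht.1])
    refine image_norm_le_of_norm_deriv_right_le_deriv_boundary (a := 0)
      (fun t ht => (hderiv t ht).continuousAt.continuousWithinAt)
      (fun t ht => (hderiv t (Set.Ico_subset_Icc_self ht)).hasDerivWithinAt)
      (by simp [binomRemainder_succ_zero]) (fun t => (hasDerivAt_pow (n + 1) t).const_mul _)
      (fun t ht => ?_) ⟨hu, le_rfl⟩
    calc ‖-s * binomRemainder (s + 1) n t‖
        ≤ ‖s‖ * (‖genBinom (-(s + 1)) n‖ * t ^ n) := by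
          rw [norm_mul, norm_neg]
          exact mul_le_mul_of_nonneg_left (ih ht.1 hs') (norm_nonneg s)
      _ = ‖genBinom (-s) (n + 1)‖ * (((n + 1 : ℕ) : ℝ) * t ^ (n + 1 - 1)) := by
          rw [Nat.add_sub_cancel, ← mul_assoc, ← hcoef]
          push_cast
          ring

noncomputable def binomTail (M : ℕ) (s : ℂ) (a : ℝ) : ℂ :=
  (a : ℂ) ^ (-(2 * s)) * binomRemainder s (M + 1) a⁻¹

lemma ofReal_mul_add_one_cpow_neg {a : ℝ} (ha : 0 < a) (M : ℕ) (s : ℂ) :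
    ((a * (a + 1) : ℝ) : ℂ) ^ (-s) =
      ∑ m ∈ range (M + 1), genBinom (-s) m * (a : ℂ) ^ (-(2 * s + m)) + binomTail M s a := by
  have ha' : (a : ℂ) ≠ 0 := mod_cast ha.ne'
  have hsplit : a * (a + 1) = a * a * (1 + a⁻¹) := by field_simp
  have hpow : ∀ m : ℕ, (a : ℂ) ^ (-(2 * s + m)) = (a : ℂ) ^ (-(2 * s)) * ((a⁻¹ : ℝ) : ℂ) ^ m := by
    intro m
    rw [neg_add, cpow_add _ _ ha', cpow_neg _ (m : ℂ), cpow_natCast, ofReal_inv, inv_pow]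
  have htwo : (a : ℂ) ^ (-(2 * s)) = (a : ℂ) ^ (-s) * (a : ℂ) ^ (-s) := by
    rw [← cpow_add _ _ ha']
    ring_nf
  rw [hsplit, ofReal_mul, mul_cpow_ofReal_nonneg (by positivity) (by positivity), ofReal_mul,
    mul_cpow_ofReal_nonneg ha.le ha.le, ← htwo, binomTail, binomRemainder]
  simp only [hpow, mul_left_comm (genBinom (-s) _), ← mul_sum]
  ring

lemma norm_binomTail_le (M : ℕ) {a σ ρ : ℝ} {s : ℂ} (ha : 1 ≤ a) (hσ : -((M : ℝ) + 1) ≤ σ)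
    (hσs : σ ≤ s.re) (hρ : ‖s‖ ≤ ρ) :
    ‖binomTail M s a‖ ≤ (ρ + (M + 1)) ^ (M + 1) * a ^ (-(2 * σ + (M + 1))) := by
  have ha0 : 0 < a := zero_lt_one.trans_le ha
  have hcpow : ‖(a : ℂ) ^ (-(2 * s))‖ ≤ a ^ (-(2 * σ)) := by
    rw [norm_cpow_eq_rpow_re_of_pos ha0]
    exact Real.rpow_le_rpow_of_exponent_le ha (by simp; linarith)
  have hrem : ‖binomRemainder s (M + 1) a⁻¹‖ ≤ (ρ + (M + 1)) ^ (M + 1) * a ^ (-((M : ℝ) + 1)) := by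
    calc ‖binomRemainder s (M + 1) a⁻¹‖ ≤ ‖genBinom (-s) (M + 1)‖ * a⁻¹ ^ (M + 1) :=
          norm_binomRemainder_le (M + 1) (inv_nonneg.2 ha0.le) (by push_cast; linarith)
      _ ≤ (ρ + (M + 1)) ^ (M + 1) * a⁻¹ ^ (M + 1) := by
          gcongr
          exact (norm_genBinom_neg_le s (M + 1)).trans (by push_cast; gcongr)
      _ = (ρ + (M + 1)) ^ (M + 1) * a ^ (-((M : ℝ) + 1)) := by
          rw [Real.rpow_neg ha0.le, ← Real.inv_rpow ha0.le]
          norm_cast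
  calc ‖binomTail M s a‖
      ≤ a ^ (-(2 * σ)) * ((ρ + (M + 1)) ^ (M + 1) * a ^ (-((M : ℝ) + 1))) := by
        rw [binomTail, norm_mul]
        exact mul_le_mul hcpow hrem (norm_nonneg _) (by positivity)
    _ = (ρ + (M + 1)) ^ (M + 1) * a ^ (-(2 * σ + (M + 1))) := by
        rw [neg_add (2 * σ), Real.rpow_add ha0]
        ring

lemma differentiable_binomTail (M : ℕ) {a : ℝ} (ha : 0 < a) :
    Differentiable ℂ fun s => binomTail M s a := by
  have hne : ∀ b : ℝ, 0 < b → Differentiable ℂ fun s : ℂ => (b : ℂ) ^ (-s) := fun b hb =>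
    differentiable_id.neg.const_cpow (Or.inl (mod_cast hb.ne'))
  refine ((hne a ha).comp (differentiable_id.const_mul 2)).mul ?_
  refine (hne _ (by positivity)).sub (Differentiable.fun_sum fun m _ => ?_)
  refine (Differentiable.div_const ?_ _).mul_const _
  exact Differentiable.fun_finsetProd fun i _ => differentiable_id.neg.sub_const _

lemma summable_rpow_natCast_add {X : ℝ} (hX : 0 < X) {c : ℝ} (hc : 1 < c) :
    Summable fun j : ℕ => ((j : ℝ) + X) ^ (-c) := by
  refine ((Real.summable_one_div_nat_add_rpow X c).2 hc).congr fun j => ?_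
  have hj : 0 < (j : ℝ) + X := by positivity
  rw [abs_of_pos hj, one_div, Real.rpow_neg hj.le]

lemma one_le_natCast_add {X : ℝ} (hX : 1 ≤ X) (j : ℕ) : 1 ≤ (j : ℝ) + X :=
  le_add_of_nonneg_of_le j.cast_nonneg hX

lemma differentiableOn_tsum_binomTail {X : ℝ} (hX : 1 ≤ X) (M : ℕ) :
    DifferentiableOn ℂ (fun s => ∑' j : ℕ, binomTail M s (j + X)) {s | -(M : ℝ) / 2 < s.re} := by
  refine differentiableOn_of_locally_differentiableOn fun s₀ hs₀ => ?_
  obtain ⟨σ, hσ, hσs₀⟩ := exists_between (α := ℝ) hs₀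
  have hU : IsOpen ({s : ℂ | σ < s.re} ∩ Metric.ball s₀ 1) :=
    (isOpen_lt continuous_const continuous_re).inter Metric.isOpen_ball
  refine ⟨_, hU, ⟨hσs₀, Metric.mem_ball_self one_pos⟩, DifferentiableOn.mono ?_
    Set.inter_subset_right⟩
  refine differentiableOn_tsum_of_summable_norm
    ((summable_rpow_natCast_add (by linarith) (c := 2 * σ + (M + 1)) (by linarith)).mul_left
      ((‖s₀‖ + 1 + (M + 1)) ^ (M + 1)))
    (fun j => (differentiable_binomTail M (by linarith [one_le_natCast_add hX j])).differentiableOn)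
    hU fun j s hs => norm_binomTail_le M (one_le_natCast_add hX j) (by linarith) hs.1.le ?_
  have hdist : ‖s - s₀‖ < 1 := mem_ball_iff_norm.1 hs.2
  linarith [norm_le_insert' s s₀]

lemma tsum_cpow_eq_sum_hurwitzSeries_add_tsum_binomTail {X : ℝ} (hX : 1 ≤ X) (M : ℕ) {s : ℂ}
    (hs : 1 / 2 < s.re) :
    ∑' j : ℕ, (((((j : ℝ) + X) * ((j : ℝ) + 1 + X)) : ℝ) : ℂ) ^ (-s) =
      ∑ m ∈ range (M + 1), genBinom (-s) m * hurwitzSeries (2 * s + m) X +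
        ∑' j : ℕ, binomTail M s (j + X) := by
  have hX0 : 0 < X := by linarith
  have hzeta : ∀ m : ℕ, Summable fun j : ℕ => (((j : ℝ) + X : ℝ) : ℂ) ^ (-(2 * s + m)) := by
    intro m
    refine Summable.of_norm ((summable_rpow_natCast_add hX0 (c := 2 * s.re + m)
      (by linarith [m.cast_nonneg (α := ℝ)])).congr fun j => ?_)
    rw [norm_cpow_eq_rpow_re_of_pos (by positivity)]
    simp
  have htail : Summable fun j : ℕ => binomTail M s (j + X) :=
    .of_norm_bounded ((summable_rpow_natCast_add hX0 (c := 2 * s.re + (M + 1))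
      (by linarith)).mul_left _)
      fun j => norm_binomTail_le M (one_le_natCast_add hX j) (by linarith) le_rfl le_rfl
  have hterm : ∀ j : ℕ, (((((j : ℝ) + X) * ((j : ℝ) + 1 + X)) : ℝ) : ℂ) ^ (-s) =
      ∑ m ∈ range (M + 1), genBinom (-s) m * (((j : ℝ) + X : ℝ) : ℂ) ^ (-(2 * s + m)) +
        binomTail M s (j + X) := fun j => by
    rw [add_right_comm _ (1 : ℝ)]
    exact ofReal_mul_add_one_cpow_neg (by positivity) M s
  rw [tsum_congr hterm, Summable.tsum_add (summable_sum fun m _ => (hzeta m).mul_left _) htail,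
    Summable.tsum_finsetSum fun m _ => (hzeta m).mul_left _]
  simp only [tsum_mul_left, hurwitzSeries, ofReal_add, ofReal_natCast]

lemma exists_norm_tsum_binomTail_le {X : ℝ} (hX : 1 ≤ X) (M : ℕ) {σ : ℝ}
    (hσ : -(M : ℝ) / 2 < σ) :
    ∃ C : ℝ, ∀ s : ℂ, σ ≤ s.re → 1 ≤ ‖s‖ →
      ‖∑' j : ℕ, binomTail M s (j + X)‖ ≤ C * ‖s‖ ^ (M + 1) := by
  have hT := summable_rpow_natCast_add (X := X) (by linarith) (c := 2 * σ + (M + 1)) (by linarith)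
  refine ⟨((M : ℝ) + 2) ^ (M + 1) * ∑' j : ℕ, ((j : ℝ) + X) ^ (-(2 * σ + (M + 1))),
    fun s hs hs1 => ?_⟩
  calc ‖∑' j : ℕ, binomTail M s (j + X)‖
      ≤ (‖s‖ + (M + 1)) ^ (M + 1) * ∑' j : ℕ, ((j : ℝ) + X) ^ (-(2 * σ + (M + 1))) :=
        tsum_of_norm_bounded (hT.hasSum.mul_left _)
          fun j => norm_binomTail_le M (one_le_natCast_add hX j) (by linarith) hs le_rfl
    _ ≤ (((M : ℝ) + 2) * ‖s‖) ^ (M + 1) * ∑' j : ℕ, ((j : ℝ) + X) ^ (-(2 * σ + (M + 1))) := by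
        gcongr
        nlinarith
    _ = _ := by rw [mul_pow]; ring

/-- For every `M ∈ ℕ` there exists `g_{M+1}` holomorphic on `{Re s > -M/2}` such that
for every `s` with `Re s > 1/2`,
`∑_{j≥0} ((j+X)(j+1+X))^{-s} = ∑_{m=0}^M binom(-s,m) ζ(2s+m, X) + g_{M+1}(s)`,
where `X = x₀⁻¹`, `x₀ ∈ (0,1)`; moreover for every `γ > 0`,
`g_{M+1}(s) = O(|s|^{M+1})` as `|s| → ∞` in `{Re s ≥ -M/2 + γ}`. -/
theorem geometric_zeta_meromorphic_extension (x₀ : ℝ) (hx : x₀ ∈ Set.Ioo (0 : ℝ) 1)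
    (M : ℕ) :
    ∃ g : ℂ → ℂ,
      DifferentiableOn ℂ g {s : ℂ | -(M : ℝ) / 2 < s.re} ∧
      (∀ s : ℂ, 1 / 2 < s.re →
        ∑' j : ℕ, (((((j : ℝ) + x₀⁻¹) * ((j : ℝ) + 1 + x₀⁻¹)) : ℝ) : ℂ) ^ (-s) =
          (∑ m ∈ Finset.range (M + 1),
            genBinom (-s) m * hurwitzSeries (2 * s + m) (x₀⁻¹ : ℝ)) + g s) ∧
      (∀ γ : ℝ, 0 < γ → ∃ C R : ℝ, ∀ s : ℂ,
        -(M : ℝ) / 2 + γ ≤ s.re → R ≤ ‖s‖ → ‖g s‖ ≤ C * ‖s‖ ^ (M + 1)) := by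
  have hX : 1 ≤ x₀⁻¹ := (one_le_inv₀ hx.1).2 hx.2.le
  refine ⟨fun s => ∑' j : ℕ, binomTail M s (j + x₀⁻¹), differentiableOn_tsum_binomTail hX M,
    fun s hs => tsum_cpow_eq_sum_hurwitzSeries_add_tsum_binomTail hX M hs, fun γ hγ => ?_⟩
  obtain ⟨C, hC⟩ := exists_norm_tsum_binomTail_le hX M (by linarith : -(M : ℝ) / 2 < -M / 2 + γ)
  exact ⟨C, 1, hC⟩
end

section
/- Let A ⊆ ℝ^N be bounded with upper Minkowski (box) dimension D̄ < N, and let V_A(t) = |A_t| denote the Lebesgue measure of the t-neighborhood of A. Then for every m ∈ ℕ and every r > 0 with D̄ + r < Re s, there is a constant C > 0 such that the m-th iterated primitive V_A^[m](t) (vanishing to order m at 0) satisfies V_A^[m](t) ≤ C·t^{N - (D̄ + r) + m} for all t ∈ (0,δ]; in particular the integral ∫₀^δ t^{s-N-1-m} V_A^[m](t) dt converges absolutely for Re s > D̄. -/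
open MeasureTheory Filter Set

/-- The tube function `V_A(t) = |A_t|`: the Lebesgue measure of the `t`-neighborhood
of `A ⊆ ℝ^N`. -/
noncomputable def tubeVol {N : ℕ} (A : Set (EuclideanSpace ℝ (Fin N))) (t : ℝ) : ℝ :=
  (volume (Metric.thickening t A)).toReal

/-- The `m`-fold iterated primitive (vanishing to order `m` at `0`) of `F`. -/
noncomputable def iterPrim (F : ℝ → ℝ) : ℕ → ℝ → ℝ
  | 0, t => F t
  | (m + 1), t => ∫ u in Set.Ioc (0 : ℝ) t, iterPrim F m u

/-- The upper Minkowski (box) dimension of `A ⊆ ℝ^N`, defined as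
`limsup_{t→0⁺} (N - log V_A(t)/log t)`. -/
noncomputable def ubDim {N : ℕ} (A : Set (EuclideanSpace ℝ (Fin N))) : ℝ :=
  Filter.limsup (fun t : ℝ => (N : ℝ) - Real.log (tubeVol A t) / Real.log t)
    (nhdsWithin 0 (Set.Ioi 0))

/-! Near `0`, `V_A(t) ≤ t ^ (N - D̄ - r)` because `D̄` is the `limsup` of `N - log V_A(t) / log t`
(a function bounded above there, as `log V_A(t)` is bounded above while `log t → -∞`), and the
monotonicity of `V_A` turns this into `V_A(t) ≤ C t ^ (N - D̄ - r)` on every `(0, T]`. For `r ≤ 1`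
the exponent exceeds `-1`, so each integration raises it by one at the cost of a constant; a larger
`r` only weakens the bound on a bounded interval. The integrability then follows by comparing the
integrand with `C t ^ ((Re s - D̄) / 2 - 1)`. -/

open Real Topology

theorem lt_rpow_of_lt_log_div_log {v t β : ℝ} (hv : 0 < v) (ht₀ : 0 < t) (ht₁ : t < 1)
    (h : β < log v / log t) : v < t ^ β := by
  rw [lt_rpow_iff_log_lt hv ht₀]
  exact (lt_div_iff_of_neg (log_neg ht₀ ht₁)).mp h

theorem exists_le_rpow_of_eventually_le {F : ℝ → ℝ} (hF : Monotone F) {α : ℝ}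
    (h : ∀ᶠ t in 𝓝[>] 0, F t ≤ t ^ α) (T : ℝ) :
    ∃ C > 0, ∀ t ∈ Ioc 0 T, F t ≤ C * t ^ α := by
  obtain ⟨δ, hδ, hFδ⟩ := mem_nhdsGT_iff_exists_Ioo_subset.mp h
  set c := min (δ ^ α) (T ^ α)
  refine ⟨max 1 (F T / c), by positivity, fun t ht => ?_⟩
  rcases lt_or_ge t δ with htδ | hδt
  · exact (hFδ ⟨ht.1, htδ⟩).trans
      (le_mul_of_one_le_left (rpow_nonneg ht.1.le α) (le_max_left _ _))
  · have hT : 0 < T := ht.1.trans_le ht.2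
    have hc : 0 < c := lt_min (rpow_pos_of_pos hδ α) (rpow_pos_of_pos hT α)
    have hct : c ≤ t ^ α := by
      rcases le_total 0 α with hα | hα
      · exact (min_le_left _ _).trans (rpow_le_rpow hδ.le hδt hα)
      · exact (min_le_right _ _).trans (rpow_le_rpow_of_nonpos ht.1 ht.2 hα)
    calc F t ≤ F T / c * c := by rw [div_mul_cancel₀ _ hc.ne']; exact hF ht.2
      _ ≤ max 1 (F T / c) * t ^ α :=
        mul_le_mul (le_max_right _ _) hct hc.le (zero_le_one.trans (le_max_left _ _))

theorem exists_le_rpow_of_le_rpow {F : ℝ → ℝ} {a b C T : ℝ} (hba : b ≤ a) (hC : 0 < C)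
    (hF : ∀ t ∈ Ioc 0 T, F t ≤ C * t ^ a) :
    ∃ C' > 0, ∀ t ∈ Ioc 0 T, F t ≤ C' * t ^ b := by
  refine ⟨C * max 1 T ^ (a - b), by positivity, fun t ht => ?_⟩
  calc F t ≤ C * t ^ a := hF t ht
    _ = C * (t ^ (a - b) * t ^ b) := by rw [← rpow_add ht.1, sub_add_cancel]
    _ ≤ C * (max 1 T ^ (a - b) * t ^ b) := by
      gcongr
      exacts [rpow_nonneg ht.1.le b, ht.1.le, ht.2.trans (le_max_right _ _)]
    _ = C * max 1 T ^ (a - b) * t ^ b := by ring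

theorem integrableOn_Ioc_rpow {β : ℝ} (hβ : -1 < β) (t : ℝ) :
    IntegrableOn (fun u : ℝ => u ^ β) (Ioc 0 t) :=
  (intervalIntegrable_iff.mp (intervalIntegral.intervalIntegrable_rpow' hβ)).mono_set
    Ioc_subset_uIoc

theorem setIntegral_Ioc_rpow {β t : ℝ} (hβ : -1 < β) (ht : 0 ≤ t) :
    ∫ u in Ioc 0 t, u ^ β = t ^ (β + 1) / (β + 1) := by
  rw [← intervalIntegral.integral_of_le ht, integral_rpow (Or.inl hβ),
    zero_rpow (by linarith), sub_zero]

theorem integrableOn_Ioc_of_norm_le_rpow {E : Type*} [NormedAddCommGroup E] {f : ℝ → E}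
    {β C T : ℝ} (hf : AEStronglyMeasurable f (volume.restrict (Ioc 0 T))) (hβ : -1 < β)
    (hfC : ∀ t ∈ Ioc 0 T, ‖f t‖ ≤ C * t ^ β) : IntegrableOn f (Ioc 0 T) :=
  ((integrableOn_Ioc_rpow hβ T).const_mul C).mono' hf
    ((ae_restrict_iff' measurableSet_Ioc).mpr (Eventually.of_forall hfC))

theorem setIntegral_Ioc_le_of_le_rpow {G : ℝ → ℝ} {β C T t : ℝ} (hG : ∀ u, 0 ≤ G u)
    (hβ : -1 < β) (hGC : ∀ u ∈ Ioc 0 T, G u ≤ C * u ^ β) (ht : t ∈ Ioc 0 T) :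
    ∫ u in Ioc 0 t, G u ≤ C / (β + 1) * t ^ (β + 1) := calc
  ∫ u in Ioc 0 t, G u ≤ ∫ u in Ioc 0 t, C * u ^ β :=
    integral_mono_of_nonneg (Eventually.of_forall hG) ((integrableOn_Ioc_rpow hβ t).const_mul C)
      ((ae_restrict_iff' measurableSet_Ioc).mpr
        (Eventually.of_forall fun u hu => hGC u ⟨hu.1, hu.2.trans ht.2⟩))
  _ = C / (β + 1) * t ^ (β + 1) := by
    rw [integral_const_mul, setIntegral_Ioc_rpow hβ ht.1.le]; ring

theorem iterPrim_succ (F : ℝ → ℝ) (m : ℕ) (t : ℝ) :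
    iterPrim F (m + 1) t = ∫ u in Ioc 0 t, iterPrim F m u := rfl

theorem iterPrim_nonneg {F : ℝ → ℝ} (hF : ∀ t, 0 ≤ F t) (m : ℕ) (t : ℝ) :
    0 ≤ iterPrim F m t := by
  induction m generalizing t with
  | zero => exact hF t
  | succ m ih => exact setIntegral_nonneg measurableSet_Ioc fun u _ => ih u

theorem measurable_iterPrim {F : ℝ → ℝ} (hF : Measurable F) (m : ℕ) :
    Measurable (iterPrim F m) := by
  induction m with
  | zero => exact hF
  | succ m ih =>
    have hset : MeasurableSet {p : ℝ × ℝ | p.2 ∈ Ioc 0 p.1} :=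
      (measurableSet_lt measurable_const measurable_snd).inter
        (measurableSet_le measurable_snd measurable_fst)
    have hjoint : StronglyMeasurable
        (Function.uncurry fun t u => (Ioc 0 t).indicator (iterPrim F m) u) :=
      ((ih.comp measurable_snd).indicator hset).stronglyMeasurable
    change Measurable fun t => ∫ u in Ioc 0 t, iterPrim F m u
    simpa only [← integral_indicator measurableSet_Ioc] using
      hjoint.integral_prod_right.measurable

theorem iterPrim_le_rpow {F : ℝ → ℝ} (hF : ∀ t, 0 ≤ F t) {α T : ℝ} (hα : -1 < α)
    (hFC : ∃ C > 0, ∀ t ∈ Ioc 0 T, F t ≤ C * t ^ α) (m : ℕ) :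
    ∃ C > 0, ∀ t ∈ Ioc 0 T, iterPrim F m t ≤ C * t ^ (α + m) := by
  induction m with
  | zero => simpa [iterPrim] using hFC
  | succ m ih =>
    obtain ⟨C, hC, hCm⟩ := ih
    have hαm : -1 < α + m := by linarith [(Nat.cast_nonneg m : (0 : ℝ) ≤ m)]
    refine ⟨C / (α + m + 1), div_pos hC (by linarith), fun t ht => ?_⟩
    rw [iterPrim_succ, Nat.cast_succ, ← add_assoc]
    exact setIntegral_Ioc_le_of_le_rpow (iterPrim_nonneg hF m) hαm hCm ht

section Tube

variable {N : ℕ} {A : Set (EuclideanSpace ℝ (Fin N))}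

theorem tubeVol_nonneg (A : Set (EuclideanSpace ℝ (Fin N))) (t : ℝ) : 0 ≤ tubeVol A t :=
  ENNReal.toReal_nonneg

theorem tubeVol_mono (hA : Bornology.IsBounded A) : Monotone (tubeVol A) := fun _ _ hab =>
  ENNReal.toReal_mono hA.thickening.measure_lt_top.ne
    (measure_mono (Metric.thickening_mono hab A))

theorem tubeVol_pos (hA : Bornology.IsBounded A) (hne : A.Nonempty) {t : ℝ} (ht : 0 < t) :
    0 < tubeVol A t := by
  obtain ⟨x, hx⟩ := hne
  refine ENNReal.toReal_pos ?_ hA.thickening.measure_lt_top.ne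
  exact ((Metric.measure_ball_pos volume x ht).trans_le
    (measure_mono (Metric.ball_subset_thickening hx t))).ne'

-- Without this bound the `limsup` defining `ubDim` would be a junk value.
theorem isBoundedUnder_le_ubDim (hA : Bornology.IsBounded A) (hne : A.Nonempty) :
    IsBoundedUnder (· ≤ ·) (𝓝[>] 0)
      (fun t : ℝ => (N : ℝ) - log (tubeVol A t) / log t) := by
  have hlim : Tendsto (fun t => (N : ℝ) - log (tubeVol A 1) / log t) (𝓝[>] 0) (𝓝 (N - 0)) :=
    tendsto_const_nhds.sub (tendsto_const_nhds.div_atBot tendsto_log_nhdsGT_zero)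
  refine hlim.isBoundedUnder_le.mono_le ?_
  filter_upwards [Ioo_mem_nhdsGT zero_lt_one] with t ht
  gcongr ?_ - ?_
  exact div_le_div_of_nonpos_of_le (log_neg ht.1 ht.2).le
    (log_le_log (tubeVol_pos hA hne ht.1) (tubeVol_mono hA ht.2.le))

theorem tubeVol_eventually_le_rpow (hA : Bornology.IsBounded A) {r : ℝ} (hr : 0 < r) :
    ∀ᶠ t in 𝓝[>] 0, tubeVol A t ≤ t ^ ((N : ℝ) - (ubDim A + r)) := by
  rcases A.eq_empty_or_nonempty with rfl | hne
  · filter_upwards [self_mem_nhdsWithin] with t ht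
    simpa [tubeVol] using rpow_nonneg (le_of_lt ht) _
  have hlt : ∀ᶠ t in 𝓝[>] 0, (N : ℝ) - log (tubeVol A t) / log t < ubDim A + r :=
    eventually_lt_of_limsup_lt (lt_add_of_pos_right _ hr) (isBoundedUnder_le_ubDim hA hne)
  filter_upwards [hlt, Ioo_mem_nhdsGT zero_lt_one] with t h ht
  exact (lt_rpow_of_lt_log_div_log (tubeVol_pos hA hne ht.1) ht.1 ht.2 (by linarith)).le

end Tube

theorem iterPrim_tubeVol_le_rpow {N : ℕ} {A : Set (EuclideanSpace ℝ (Fin N))}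
    (hA : Bornology.IsBounded A) (hD : ubDim A < N) {r : ℝ} (hr : 0 < r) (m : ℕ) (T : ℝ) :
    ∃ C > 0, ∀ t ∈ Ioc 0 T,
      iterPrim (tubeVol A) m t ≤ C * t ^ ((N : ℝ) - (ubDim A + r) + m) := by
  -- shrinking `r` keeps the exponent above `-1`, so that the primitives stay finite
  set r' := min r 1
  have hr' : 0 < r' := lt_min hr one_pos
  have hα : -1 < (N : ℝ) - (ubDim A + r') := by linarith [min_le_right r 1]
  obtain ⟨C, hC, hCm⟩ := iterPrim_le_rpow (tubeVol_nonneg A) hα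
    (exists_le_rpow_of_eventually_le (tubeVol_mono hA) (tubeVol_eventually_le_rpow hA hr') T) m
  exact exists_le_rpow_of_le_rpow (by linarith [min_le_left r 1]) hC hCm

theorem iterPrim_tube_bound_and_integrable_general {N : ℕ} (A : Set (EuclideanSpace ℝ (Fin N)))
    (hA : Bornology.IsBounded A) (hD : ubDim A < N) (δ : ℝ) (m : ℕ) :
    (∀ r : ℝ, 0 < r → ∃ C > 0, ∀ t ∈ Set.Ioc (0 : ℝ) δ,
      iterPrim (tubeVol A) m t ≤ C * t ^ ((N : ℝ) - (ubDim A + r) + m)) ∧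
    (∀ s : ℂ, ubDim A < s.re →
      MeasureTheory.IntegrableOn
        (fun t : ℝ => (t : ℂ) ^ (s - N - 1 - m) * ((iterPrim (tubeVol A) m t : ℝ) : ℂ))
        (Set.Ioc (0 : ℝ) δ)) := by
  refine ⟨fun r hr => iterPrim_tubeVol_le_rpow hA hD hr m δ, fun s hs => ?_⟩
  set r := (s.re - ubDim A) / 2
  have hr : 0 < r := half_pos (sub_pos.mpr hs)
  obtain ⟨C, -, hC⟩ := iterPrim_tubeVol_le_rpow hA hD hr m δ
  have hmeas : Measurable (iterPrim (tubeVol A) m) :=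
    measurable_iterPrim (tubeVol_mono hA).measurable m
  refine integrableOn_Ioc_of_norm_le_rpow (C := C) (β := r - 1)
    (by fun_prop) (by linarith) fun t ht => ?_
  rw [norm_mul, Complex.norm_cpow_eq_rpow_re_of_pos ht.1, Complex.norm_real,
    Real.norm_of_nonneg (iterPrim_nonneg (tubeVol_nonneg A) m t)]
  calc t ^ (s - N - 1 - m).re * iterPrim (tubeVol A) m t
      ≤ t ^ (s - N - 1 - m).re * (C * t ^ ((N : ℝ) - (ubDim A + r) + m)) :=
        mul_le_mul_of_nonneg_left (hC t ht) (rpow_nonneg ht.1.le _)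
    _ = C * t ^ (r - 1) := by
        rw [mul_left_comm, ← rpow_add ht.1]
        congr 2
        simp only [Complex.sub_re, Complex.natCast_re, Complex.one_re, r]
        ring

/-- Let `A ⊆ ℝ^N` be bounded with upper Minkowski dimension `D̄ < N`. Then for every
`m ∈ ℕ` and every `r > 0` there is `C > 0` with
`V_A^[m](t) ≤ C·t^{N-(D̄+r)+m}` on `(0,δ]`; in particular
`∫₀^δ t^{s-N-1-m} V_A^[m](t) dt` converges absolutely whenever `Re s > D̄`. -/
theorem iterPrim_tube_bound_and_integrable {N : ℕ} (A : Set (EuclideanSpace ℝ (Fin N)))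
    (hA : Bornology.IsBounded A) (hD : ubDim A < N) (δ : ℝ) (hδ : 0 < δ) (m : ℕ) :
    (∀ r : ℝ, 0 < r → ∃ C > 0, ∀ t ∈ Set.Ioc (0 : ℝ) δ,
      iterPrim (tubeVol A) m t ≤ C * t ^ ((N : ℝ) - (ubDim A + r) + m)) ∧
    (∀ s : ℂ, ubDim A < s.re →
      MeasureTheory.IntegrableOn
        (fun t : ℝ => (t : ℂ) ^ (s - N - 1 - m) * ((iterPrim (tubeVol A) m t : ℝ) : ℂ))
        (Set.Ioc (0 : ℝ) δ)) :=
  iterPrim_tube_bound_and_integrable_general A hA hD δ m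
end
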